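/- arXiv:1511.08826 — 2 statements merged into one kernel-verified Lean document; each statement's English description precedes it below -/
import Mathlib

section
/- Let t ≥ 3 be an integer, let G be a finite simple graph containing no cycle whose length lies in {8, 10, 12, …, 2t+2}, and let x be a vertex of G. Call a vertex u of G a bottleneck of type 1 if u is at distance exactly t from x and u has at least four neighbours at distance exactly t−1 from x. Then the number of bottlenecks of type 1 is at most 2·|A_{t−1}(x)|, twice the number of vertices at distance exactly t−1 from x. -/
/-!
Fix a breadth-first search tree rooted at `x`, with parent map `π`. The forbidden cycle lengths
make this tree rigid near a vertex `u` at level `t`: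
* any two lower neighbours of `u` have the same grandparent, for otherwise their ancestor chains,
  followed up to the vertex where they meet and closed through `u`, form an even cycle of length
  between `8` and `2t`;
* hence if two level-`t` vertices share a lower neighbour, all their other lower neighbours have
  a common parent, else there is an `8`-cycle through the grandparent;
* a zigzag `a₁ u₁ a₂ u₂ a₃ u₃ a₄` between levels `t - 1` and `t` has `π a₁ ≠ π a₄`, else it
  closes into an `8`-cycle.
Together these show that a bottleneck cannot share two distinct lower neighbours with two
different bottlenecks. Sending each bottleneck to a lower neighbour that no other bottleneck sees,
when it has one, and to any lower neighbour otherwise, is then at most two-to-one.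
-/

namespace Set

variable {α β : Type*}

theorem exists_mem_notMem_of_length_lt_ncard {s : Set α} {l : List α} (h : l.length < s.ncard) :
    ∃ e ∈ s, e ∉ l := by
  classical
  have hl : (↑l.toFinset : Set α).ncard < s.ncard := by
    rw [ncard_coe_finset]
    exact lt_of_le_of_lt l.toFinset_card_le h
  obtain ⟨e, he, hel⟩ := exists_mem_notMem_of_ncard_lt_ncard hl
  exact ⟨e, he, by simpa using hel⟩

theorem ncard_le_mul_ncard_of_mapsTo {f : β → α} {B : Set β} {A : Set α} (hB : B.Finite)
    (hA : A.Finite) (hf : MapsTo f B A) (n : ℕ) (hn : ∀ a ∈ A, {b ∈ B | f b = a}.ncard ≤ n) :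
    B.ncard ≤ n * A.ncard := by
  classical
  lift B to Finset β using hB
  lift A to Finset α using hA
  simp only [ncard_coe_finset]
  refine Finset.card_le_mul_card_image_of_maps_to hf n fun a ha => ?_
  rw [← ncard_coe_finset, Finset.coe_filter]
  exact hn a ha

theorem ncard_le_two_mul_ncard_of_shared_eq {B : Set β} {A : Set α} (hA : A.Finite)
    (N : β → Set α) (hNA : ∀ u ∈ B, N u ⊆ A) (hN : ∀ u ∈ B, 1 < (N u).ncard)
    (hshared : ∀ u ∈ B, ∀ w ∈ B, ∀ w' ∈ B, w ≠ u → w' ≠ u → w ≠ w' →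
      ∀ a ∈ N u ∩ N w, ∀ a' ∈ N u ∩ N w', a = a') :
    B.ncard ≤ 2 * A.ncard := by
  rcases B.finite_or_infinite with hB | hB
  swap
  · simp [hB.ncard]
  rcases B.eq_empty_or_nonempty with rfl | ⟨u₀, hu₀⟩
  · simp
  obtain ⟨a₀, -⟩ := nonempty_of_ncard_ne_zero (hN u₀ hu₀).ne_bot
  have hψ : ∀ u, ∃ a, u ∈ B → a ∈ N u ∧
      ((∃ b ∈ N u, ∀ w ∈ B, w ≠ u → b ∉ N w) → ∀ w ∈ B, w ≠ u → a ∉ N w) := by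
    intro u
    by_cases hpriv : ∃ b ∈ N u, ∀ w ∈ B, w ≠ u → b ∉ N w
    · obtain ⟨b, hb, hbpriv⟩ := hpriv
      exact ⟨b, fun _ => ⟨hb, fun _ => hbpriv⟩⟩
    · by_cases hu : u ∈ B
      · obtain ⟨b, hb⟩ := nonempty_of_ncard_ne_zero (hN u hu).ne_bot
        exact ⟨b, fun _ => ⟨hb, fun h => absurd h hpriv⟩⟩
      · exact ⟨a₀, fun h => absurd h hu⟩
  choose ψ hψ using hψ
  refine ncard_le_mul_ncard_of_mapsTo hB hA (fun u hu => hNA u hu (hψ u hu).1) 2 fun p _ => ?_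
  by_contra! h3
  obtain ⟨v₁, v₂, v₃, h₁, h₂, h₃, h₁₂, h₁₃, h₂₃⟩ :=
    (two_lt_ncard_iff (hB.subset (sep_subset _ _))).1 h3
  have hp : ∀ v ∈ {b ∈ B | ψ b = p}, p ∈ N v := fun v hv => hv.2 ▸ (hψ v hv.1).1
  obtain ⟨a, ha, hap⟩ := exists_ne_of_one_lt_ncard (hN v₁ h₁.1) p
  -- `ψ v₁ = p` is shared with `v₂`, so `v₁` has no private element at all
  obtain ⟨w, hw, hwv₁, haw⟩ : ∃ w ∈ B, w ≠ v₁ ∧ a ∈ N w := by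
    by_contra! hpriv
    exact (hψ v₁ h₁.1).2 ⟨a, ha, hpriv⟩ v₂ h₂.1 h₁₂.symm (h₁.2 ▸ hp v₂ h₂)
  obtain ⟨v, hv, hvv₁, hvw, hpv⟩ : ∃ v ∈ B, v ≠ v₁ ∧ v ≠ w ∧ p ∈ N v := by
    rcases eq_or_ne v₂ w with rfl | hv₂w
    · exact ⟨v₃, h₃.1, h₁₃.symm, h₂₃.symm, hp v₃ h₃⟩
    · exact ⟨v₂, h₂.1, h₁₂.symm, hv₂w, hp v₂ h₂⟩
  exact hap (hshared v₁ h₁.1 w hw v hv hwv₁ hvv₁ hvw.symm a ⟨ha, haw⟩ p ⟨hp v₁ h₁, hpv⟩)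

end Set

namespace SimpleGraph

variable {V : Type*} {G : SimpleGraph V}

theorem Walk.IsPath.cons_concat_isCycle {a b w : V} {P : G.Walk a b} (hP : P.IsPath)
    (hab : a ≠ b) (hw : w ∉ P.support) (hwa : G.Adj w a) (hbw : G.Adj b w) :
    (Walk.cons hwa (P.concat hbw)).IsCycle := by
  rw [Walk.isCycle_iff_isPath_tail_and_le_length]
  refine ⟨by simpa using hP.concat hw hbw, ?_⟩
  have : P.length ≠ 0 := fun h => hab (Walk.eq_of_length_eq_zero h)
  simp only [Walk.length_cons, Walk.length_concat]
  omega

variable {x v : V}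

theorem exists_adj_dist_add_one_eq (h : 0 < G.dist x v) :
    ∃ p, G.Adj v p ∧ G.dist x p + 1 = G.dist x v := by
  obtain ⟨w, hw⟩ := (Reachable.of_dist_ne_zero h.ne').exists_walk_length_eq_dist
  have hxv : x ≠ v := by rintro rfl; simp at h
  obtain ⟨p, hvp, q, hq⟩ := Walk.exists_eq_cons_of_ne hxv.symm w.reverse
  have hlen : q.length + 1 = G.dist x v := by
    simpa [hw] using (congrArg Walk.length hq).symm
  have hle : G.dist x p ≤ q.length := by simpa using dist_le q.reverse
  have hge : G.dist x v ≤ G.dist x p + G.dist p v := hvp.symm.reachable.dist_triangle_right x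
  rw [dist_eq_one_iff_adj.2 hvp.symm] at hge
  exact ⟨p, hvp, by omega⟩

variable (G) in
noncomputable def bfsParent (x v : V) : V :=
  if h : 0 < G.dist x v then (exists_adj_dist_add_one_eq h).choose else v

theorem adj_bfsParent (h : 0 < G.dist x v) : G.Adj v (G.bfsParent x v) := by
  rw [bfsParent, dif_pos h]
  exact (exists_adj_dist_add_one_eq h).choose_spec.1

theorem dist_bfsParent_add_one (h : 0 < G.dist x v) :
    G.dist x (G.bfsParent x v) + 1 = G.dist x v := by
  rw [bfsParent, dif_pos h]
  exact (exists_adj_dist_add_one_eq h).choose_spec.2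

theorem bfsParent_eq_of_dist_eq_one (h : G.dist x v = 1) : G.bfsParent x v = x := by
  have hr : G.Reachable x (G.bfsParent x v) :=
    (Reachable.of_dist_ne_zero (by omega)).trans (adj_bfsParent (by omega)).reachable
  have := dist_bfsParent_add_one (G := G) (x := x) (v := v) (by omega)
  exact (hr.dist_eq_zero_iff.1 (by omega)).symm

-- `P` climbs the ancestor chains of `a` and `a'` up to where they merge, `m` levels higher.
theorem exists_isPath_of_dist_eq {d : ℕ} (hd : 0 < d) {a a' : V} (ha : G.dist x a = d)
    (ha' : G.dist x a' = d) (hne : a ≠ a') :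
    ∃ (m : ℕ) (P : G.Walk a a'), P.IsPath ∧ P.length = 2 * m ∧ m ≤ d ∧
      (∀ v ∈ P.support, G.dist x v ≤ d) ∧
      ∀ k, (G.bfsParent x)^[k] a ≠ (G.bfsParent x)^[k] a' → k < m := by
  induction d generalizing a a' with
  | zero => omega
  | succ d ih =>
    have hap := adj_bfsParent (G := G) (x := x) (v := a) (by omega)
    have ha'p := adj_bfsParent (G := G) (x := x) (v := a') (by omega)
    have hp := dist_bfsParent_add_one (G := G) (x := x) (v := a) (by omega)
    have hp' := dist_bfsParent_add_one (G := G) (x := x) (v := a') (by omega)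
    by_cases hpp : G.bfsParent x a = G.bfsParent x a'
    · refine ⟨1, .cons hap (.cons (hpp ▸ ha'p.symm) .nil), ?_, rfl, by omega, ?_, ?_⟩
      · simp only [Walk.isPath_def, Walk.support_cons, Walk.support_nil, List.nodup_cons,
          List.mem_cons, List.not_mem_nil]
        grind
      · simp only [Walk.support_cons, Walk.support_nil, List.mem_cons, List.not_mem_nil]
        grind
      · rintro (_ | k) hk
        · exact Nat.one_pos
        · exact absurd (congrArg (G.bfsParent x)^[k] hpp) hk
    · have hd : 0 < d := by
        by_contra hd0
        exact hpp ((bfsParent_eq_of_dist_eq_one (by omega)).trans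
          (bfsParent_eq_of_dist_eq_one (by omega)).symm)
      obtain ⟨m, Q, hQ, hQlen, hmd, hQd, hQk⟩ := ih hd (by omega) (by omega) hpp
      have ha'Q : a' ∉ Q.support := fun h => by have := hQd a' h; omega
      have haQ : a ∉ (Q.concat ha'p.symm).support := by
        rw [Walk.support_concat, List.mem_append, List.mem_singleton]
        rintro (h | rfl)
        · have := hQd a h; omega
        · exact hne rfl
      refine ⟨m + 1, .cons hap (Q.concat ha'p.symm), (hQ.concat ha'Q _).cons haQ,
        by simp [hQlen]; ring, by omega, ?_, ?_⟩
      · intro v hv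
        simp only [Walk.support_cons, Walk.support_concat, List.mem_cons, List.mem_append,
          List.not_mem_nil, or_false] at hv
        rcases hv with rfl | hv | rfl
        · omega
        · have := hQd v hv; omega
        · omega
      · rintro (_ | k) hk
        · omega
        · exact Nat.succ_lt_succ (hQk k hk)

variable (G) in
def nbrsAtDist (x : V) (d : ℕ) (u : V) : Set V := {w | G.Adj u w ∧ G.dist x w = d}

-- No cycle of length `8, 10, …, 2 * n`.
variable (G) in
def NoEvenCycleUpTo (n : ℕ) : Prop :=
  ∀ k, 4 ≤ k → k ≤ n → ∀ (v : V) (c : G.Walk v v), c.IsCycle → c.length ≠ 2 * k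

theorem bfsParent_bfsParent_eq_of_mem_nbrsAtDist {n d : ℕ} (hG : G.NoEvenCycleUpTo n)
    (hdn : d + 1 ≤ n) (hd : 0 < d) {u a a' : V} (hu : G.dist x u = d + 1)
    (ha : a ∈ G.nbrsAtDist x d u) (ha' : a' ∈ G.nbrsAtDist x d u) :
    G.bfsParent x (G.bfsParent x a) = G.bfsParent x (G.bfsParent x a') := by
  rcases eq_or_ne a a' with rfl | hne
  · rfl
  obtain ⟨m, P, hP, hlen, hmd, hPd, hk⟩ := exists_isPath_of_dist_eq hd ha.2 ha'.2 hne
  by_contra h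
  have hm : 2 < m := hk 2 h
  have huP : u ∉ P.support := fun h => by have := hPd u h; omega
  have hc := hP.cons_concat_isCycle hne huP ha.1 ha'.1.symm
  exact hG (m + 1) (by omega) (by omega) u _ hc (by simp [hlen]; ring)

theorem bfsParent_ne_of_isPath {ℓ : ℕ} (hℓ : 0 < ℓ) {a b : V} {P : G.Walk a b}
    (hP : P.IsPath) (hab : a ≠ b) (ha : G.dist x a = ℓ) (hb : G.dist x b = ℓ)
    (hPℓ : ∀ v ∈ P.support, ℓ ≤ G.dist x v)
    (hG : ∀ (v : V) (c : G.Walk v v), c.IsCycle → c.length ≠ P.length + 2) :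
    G.bfsParent x a ≠ G.bfsParent x b := by
  intro h
  have hpa := dist_bfsParent_add_one (G := G) (x := x) (v := a) (by omega)
  have hpP : G.bfsParent x a ∉ P.support := fun hp => by have := hPℓ _ hp; omega
  have hc := hP.cons_concat_isCycle hab hpP (adj_bfsParent (by omega)).symm
    (h ▸ adj_bfsParent (by omega))
  exact hG _ _ hc (by simp)

theorem bfsParent_eq_of_mem_nbrsAtDist {d : ℕ} (hd : 2 ≤ d) (hG : G.NoEvenCycleUpTo (d + 2))
    {u₁ u₂ a₁ a₂ a₃ : V} (hu₁ : G.dist x u₁ = d + 1) (hu₂ : G.dist x u₂ = d + 1)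
    (h₁₁ : a₁ ∈ G.nbrsAtDist x d u₁) (h₁₂ : a₂ ∈ G.nbrsAtDist x d u₁)
    (h₂₂ : a₂ ∈ G.nbrsAtDist x d u₂) (h₂₃ : a₃ ∈ G.nbrsAtDist x d u₂)
    (hu : u₁ ≠ u₂) (ha : [a₁, a₂, a₃].Nodup) :
    G.bfsParent x a₁ = G.bfsParent x a₃ := by
  by_contra hne
  have hg := (bfsParent_bfsParent_eq_of_mem_nbrsAtDist hG (by omega) (by omega) hu₁ h₁₁ h₁₂).trans
    (bfsParent_bfsParent_eq_of_mem_nbrsAtDist hG (by omega) (by omega) hu₂ h₂₂ h₂₃)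
  have ha₁ : G.dist x a₁ = d := h₁₁.2
  have ha₂ : G.dist x a₂ = d := h₁₂.2
  have ha₃ : G.dist x a₃ = d := h₂₃.2
  have hp₁ := dist_bfsParent_add_one (G := G) (x := x) (v := a₁) (by omega)
  have hp₃ := dist_bfsParent_add_one (G := G) (x := x) (v := a₃) (by omega)
  let P : G.Walk (G.bfsParent x a₁) (G.bfsParent x a₃) :=
    .cons (adj_bfsParent (by omega)).symm <| .cons h₁₁.1.symm <| .cons h₁₂.1 <|
      .cons h₂₂.1.symm <| .cons h₂₃.1 <| .cons (adj_bfsParent (by omega)) .nil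
  have hP : P.IsPath := by
    simp only [P, Walk.isPath_def, Walk.support_cons, Walk.support_nil, List.nodup_cons,
      List.mem_cons, List.not_mem_nil, or_false, not_or, List.nodup_nil, and_true] at ha ⊢
    and_intros <;> grind
  refine bfsParent_ne_of_isPath (ℓ := d - 1) (by omega) hP hne (by omega) (by omega) ?_
    (fun v c hc => hG 4 le_rfl (by omega) v c hc) hg
  simp only [P, Walk.support_cons, Walk.support_nil, List.mem_cons, List.not_mem_nil, or_false]
  rintro v (rfl | rfl | rfl | rfl | rfl | rfl | rfl) <;> omega

theorem bfsParent_ne_of_zigzag {d : ℕ} (hd : 0 < d)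
    (hG : ∀ (v : V) (c : G.Walk v v), c.IsCycle → c.length ≠ 8)
    {u₁ u₂ u₃ a₁ a₂ a₃ a₄ : V} (hu₁ : G.dist x u₁ = d + 1) (hu₂ : G.dist x u₂ = d + 1)
    (hu₃ : G.dist x u₃ = d + 1)
    (h₁₁ : a₁ ∈ G.nbrsAtDist x d u₁) (h₁₂ : a₂ ∈ G.nbrsAtDist x d u₁)
    (h₂₂ : a₂ ∈ G.nbrsAtDist x d u₂) (h₂₃ : a₃ ∈ G.nbrsAtDist x d u₂)
    (h₃₃ : a₃ ∈ G.nbrsAtDist x d u₃) (h₃₄ : a₄ ∈ G.nbrsAtDist x d u₃)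
    (hu : [u₁, u₂, u₃].Nodup) (ha : [a₁, a₂, a₃, a₄].Nodup) :
    G.bfsParent x a₁ ≠ G.bfsParent x a₄ := by
  have ha₁ : G.dist x a₁ = d := h₁₁.2
  have ha₂ : G.dist x a₂ = d := h₁₂.2
  have ha₃ : G.dist x a₃ = d := h₂₃.2
  have ha₄ : G.dist x a₄ = d := h₃₄.2
  let P : G.Walk a₁ a₄ :=
    .cons h₁₁.1.symm <| .cons h₁₂.1 <| .cons h₂₂.1.symm <| .cons h₂₃.1 <| .cons h₃₃.1.symm <|
      .cons h₃₄.1 .nil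
  have hP : P.IsPath := by
    simp only [P, Walk.isPath_def, Walk.support_cons, Walk.support_nil, List.nodup_cons,
      List.mem_cons, List.not_mem_nil, or_false, not_or, List.nodup_nil, and_true] at hu ha ⊢
    and_intros <;> grind
  refine bfsParent_ne_of_isPath hd hP (by grind) ha₁ ha₄ ?_ hG
  simp only [P, Walk.support_cons, Walk.support_nil, List.mem_cons, List.not_mem_nil, or_false]
  rintro v (rfl | rfl | rfl | rfl | rfl | rfl | rfl) <;> omega

variable (G) in
def IsTypeOneBottleneck (x : V) (d : ℕ) (u : V) : Prop :=
  G.dist x u = d + 1 ∧ 4 ≤ (G.nbrsAtDist x d u).ncard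

theorem IsTypeOneBottleneck.eq_of_mem_nbrsAtDist_inter {d : ℕ} (hd : 2 ≤ d)
    (hG : G.NoEvenCycleUpTo (d + 2)) {u u₁ u₃ s₁ s₃ : V} (hu : G.IsTypeOneBottleneck x d u)
    (hu₁ : G.IsTypeOneBottleneck x d u₁) (hu₃ : G.IsTypeOneBottleneck x d u₃)
    (hu₁u : u₁ ≠ u) (hu₃u : u₃ ≠ u) (hu₁₃ : u₁ ≠ u₃)
    (hs₁ : s₁ ∈ G.nbrsAtDist x d u ∩ G.nbrsAtDist x d u₁)
    (hs₃ : s₃ ∈ G.nbrsAtDist x d u ∩ G.nbrsAtDist x d u₃) : s₁ = s₃ := by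
  by_contra hs
  have h8 : ∀ (v : V) (c : G.Walk v v), c.IsCycle → c.length ≠ 8 := hG 4 le_rfl (by omega)
  obtain ⟨c, hc, hc'⟩ := Set.exists_mem_notMem_of_length_lt_ncard (l := [s₁, s₃])
    (lt_of_lt_of_le (by simp) hu.2)
  obtain ⟨a, ha, ha'⟩ := Set.exists_mem_notMem_of_length_lt_ncard (l := [s₁, s₃, c])
    (lt_of_lt_of_le (by simp) hu₁.2)
  simp only [List.mem_cons, List.not_mem_nil, or_false, not_or] at hc' ha'
  have hac : G.bfsParent x a = G.bfsParent x c :=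
    bfsParent_eq_of_mem_nbrsAtDist hd hG hu₁.1 hu.1 ha hs₁.2 hs₁.1 hc hu₁u (by grind)
  by_cases hs₁u₃ : s₁ ∈ G.nbrsAtDist x d u₃
  · exact bfsParent_ne_of_zigzag (by omega) h8 hu₁.1 hu₃.1 hu.1 ha hs₁.2 hs₁u₃ hs₃.2 hs₃.1 hc
      (by grind) (by grind) hac
  · obtain ⟨a', ha'N, ha''⟩ := Set.exists_mem_notMem_of_length_lt_ncard (l := [s₃, c, a])
      (lt_of_lt_of_le (by simp) hu₃.2)
    simp only [List.mem_cons, List.not_mem_nil, or_false, not_or] at ha''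
    have ha'c : G.bfsParent x a' = G.bfsParent x c :=
      bfsParent_eq_of_mem_nbrsAtDist hd hG hu₃.1 hu.1 ha'N hs₃.2 hs₃.1 hc hu₃u (by grind)
    exact bfsParent_ne_of_zigzag (by omega) h8 hu₁.1 hu.1 hu₃.1 ha hs₁.2 hs₁.1 hs₃.1 hs₃.2 ha'N
      (by grind) (by grind) (hac.trans ha'c.symm)

end SimpleGraph

/-- If `t ≥ 3` and `G` has no cycle of length in `{8, 10, ..., 2t+2}`, then the number of
bottlenecks of type 1 (vertices at distance exactly `t` from `x` with at least four
neighbours at distance exactly `t-1` from `x`) is at most twice the number of vertices at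
distance exactly `t-1` from `x`. -/
theorem bottlenecks_type_one_bound
    (t : ℕ) (ht : 3 ≤ t) (V : Type) [Fintype V] (G : SimpleGraph V)
    (hcyc : ∀ (v : V) (w : G.Walk v v), w.IsCycle →
      ¬(8 ≤ w.length ∧ w.length ≤ 2 * t + 2 ∧ Even w.length))
    (x : V) :
    {u : V | G.dist x u = t ∧ 4 ≤ {w : V | G.Adj u w ∧ G.dist x w = t - 1}.ncard}.ncard ≤
      2 * {v : V | G.dist x v = t - 1}.ncard := by
  obtain ⟨d, rfl⟩ : ∃ d, t = d + 1 := ⟨t - 1, by omega⟩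
  have hG : G.NoEvenCycleUpTo (d + 2) := fun k hk4 hkd v c hc hlen =>
    hcyc v c hc ⟨by omega, by omega, hlen ▸ even_two_mul k⟩
  rw [Nat.add_sub_cancel]
  exact Set.ncard_le_two_mul_ncard_of_shared_eq (Set.toFinite _) (G.nbrsAtDist x d)
    (fun _ _ _ hw => hw.2) (fun _ hu => lt_of_lt_of_le (by norm_num) hu.2)
    fun _ hu _ hw _ hw' hwu hw'u hww' _ ha _ ha' =>
      SimpleGraph.IsTypeOneBottleneck.eq_of_mem_nbrsAtDist_inter (by omega) hG hu hw hw'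
        hwu hw'u hww' ha ha'
end

section
/- For every real ε with 0 < ε < 1 there exists an integer d₀ such that for every integer d ≥ d₀ there is a finite simple graph G of maximum degree at most d and girth at least 4 with χ(G³) ≥ (1 − ε)·d³/8. -/
/-- The `t`-th power of a simple graph `G`: two distinct vertices are adjacent
iff they are joined in `G` by a walk of length at most `t`. -/
def SimpleGraph.power {V : Type*} (G : SimpleGraph V) (t : ℕ) : SimpleGraph V where
  Adj u v := u ≠ v ∧ ∃ w : G.Walk u v, w.length ≤ t
  symm := ⟨by
    rintro u v ⟨huv, w, hw⟩
    exact ⟨huv.symm, w.reverse, by simpa using hw⟩⟩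
  loopless := ⟨by rintro u ⟨h, -⟩; exact h rfl⟩

/-!
Over an alphabet `α` with `m` letters, take as vertices the words `abc` with `a ≠ b ≠ c`
(`m (m - 1)²` of them) and join `abc` to each shift `bcz` with `z ≠ a`. Further, for each of
the letter pairs `(a, b)`, `(b, c)`, `(c, b)` of a word, all words with the same pair share a
hub; two hubs of the same kind on opposite sides are joined when their pairs agree in the
first letter only. Two words agreeing in some position are then at distance at most 3 through
the hubs, and two words `abc`, `a'b'c'` differing everywhere are joined by the shift path
`abc, bca', ca'b', a'b'c'` (or its reverse, or `abc, bcb', cb'a` when `a' = c` and `c' = a`).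
So the words form a clique in `G³`, while `G` is triangle-free of maximum degree `2m + 6`.
With `m ≈ d / 2` this gives `χ(G³) ≳ d³ / 8`.
-/

open Set

lemma Set.ncard_le_natCard_of_injOn {α β : Type*} [Finite β] {s : Set α} (f : α → β)
    (hf : InjOn f s) : s.ncard ≤ Nat.card β :=
  (ncard_le_ncard_of_injOn f (fun _ _ => mem_univ _) hf).trans_eq (ncard_univ β)

namespace SimpleGraph

variable {V : Type*} {G : SimpleGraph V}

lemma four_le_egirth_of_cliqueFree_three (hG : G.CliqueFree 3) : 4 ≤ G.egirth := by
  refine le_egirth.2 fun a w hw => ?_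
  have hlen : w.length ≠ 3 := fun h3 =>
    let ⟨s, hs⟩ := is3Clique_iff_exists_cycle_length_three.2 ⟨a, w, hw, h3⟩
    hG s hs
  have := hw.three_le_length
  exact_mod_cast (show 4 ≤ w.length by omega)

lemma natCard_le_chromaticNumber_toNat [Finite V] {ι : Type*} (f : ι → V)
    (hf : Pairwise fun i j => G.Adj (f i) (f j)) : Nat.card ι ≤ G.chromaticNumber.toNat :=
  G.colorable_chromaticNumber_of_fintype.card_le_of_pairwise_adj f hf

end SimpleGraph

namespace ShiftHub

@[ext]
structure Word (α : Type*) where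
  a : α
  b : α
  c : α
  a_ne_b : a ≠ b
  b_ne_c : b ≠ c

structure Hub (α : Type*) where
  kind : Fin 3
  side : Bool
  shared : α
  other : α

variable {α : Type*}

instance [Finite α] : Finite (Word α) :=
  Finite.of_injective (fun x : Word α => (x.a, x.b, x.c)) fun x y h => by
    simp only [Prod.mk.injEq] at h
    exact Word.ext h.1 h.2.1 h.2.2

instance [Finite α] : Finite (Hub α) :=
  Finite.of_injective (fun h : Hub α => (h.kind, h.side, h.shared, h.other)) fun g h e => by
    cases g; cases h
    simp_all

-- `y.c ≠ x.a` rules out the triangle of rotations `abc, bca, cab`.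
def shift (x y : Word α) : Prop :=
  y.a = x.b ∧ y.b = x.c ∧ y.c ≠ x.a

-- The pair read by hubs of kind `i`. Its letters sit in adjacent positions of the word, so no
-- hub contains a word together with one of its shifts.
def Word.key (x : Word α) : Fin 3 → α × α
  | 0 => (x.a, x.b)
  | 1 => (x.b, x.c)
  | 2 => (x.c, x.b)

def Word.free (x : Word α) : Fin 3 → α
  | 0 => x.c
  | _ => x.a

instance : Membership (Word α) (Hub α) :=
  ⟨fun h x => x.key h.kind = (h.shared, h.other)⟩

lemma Hub.mem_def {x : Word α} {h : Hub α} : x ∈ h ↔ x.key h.kind = (h.shared, h.other) :=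
  Iff.rfl

def HubAdj (g h : Hub α) : Prop :=
  g.kind = h.kind ∧ g.side ≠ h.side ∧ g.shared = h.shared ∧ g.other ≠ h.other

variable (α) in
def graph : SimpleGraph (Word α ⊕ Hub α) where
  Adj
    | .inl x, .inl y => shift x y ∨ shift y x
    | .inl x, .inr h => x ∈ h
    | .inr h, .inl x => x ∈ h
    | .inr g, .inr h => HubAdj g h
  symm := ⟨by
    rintro (x | g) (y | h)
    exacts [Or.symm, id, id, fun ⟨h1, h2, h3, h4⟩ => ⟨h1.symm, h2.symm, h3.symm, h4.symm⟩]⟩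
  loopless := ⟨by
    rintro (x | g)
    · rintro (⟨h1, -⟩ | ⟨h1, -⟩) <;> exact x.a_ne_b h1
    · exact fun h => h.2.1 rfl⟩

@[simp] lemma graph_adj_inl_inl {x y : Word α} :
    (graph α).Adj (.inl x) (.inl y) ↔ shift x y ∨ shift y x := Iff.rfl
@[simp] lemma graph_adj_inl_inr {x : Word α} {h : Hub α} :
    (graph α).Adj (.inl x) (.inr h) ↔ x ∈ h := Iff.rfl
@[simp] lemma graph_adj_inr_inl {x : Word α} {h : Hub α} :
    (graph α).Adj (.inr h) (.inl x) ↔ x ∈ h := Iff.rfl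
@[simp] lemma graph_adj_inr_inr {g h : Hub α} :
    (graph α).Adj (.inr g) (.inr h) ↔ HubAdj g h := Iff.rfl

lemma adj_of_shift {x y : Word α} (h : shift x y) : (graph α).Adj (.inl x) (.inl y) := .inl h

section TriangleFree

lemma key_ne_of_shift {x y : Word α} (h : shift x y) (i : Fin 3) : x.key i ≠ y.key i := by
  obtain ⟨a, b, c, hab, hbc⟩ := x
  obtain ⟨a', b', c', hab', hbc'⟩ := y
  obtain ⟨rfl, rfl, -⟩ := h
  fin_cases i <;> simp_all [Word.key]

lemma not_shift_triangle {x y z : Word α} (hxy : shift x y ∨ shift y x)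
    (hyz : shift y z ∨ shift z y) (hxz : shift x z ∨ shift z x) : False := by
  obtain ⟨a, b, c, hab, hbc⟩ := x
  obtain ⟨a', b', c', hab', hbc'⟩ := y
  obtain ⟨a'', b'', c'', hab'', hbc''⟩ := z
  simp only [shift] at hxy hyz hxz
  grind

lemma not_shift_of_mem {x y : Word α} {h : Hub α} (hx : x ∈ h) (hy : y ∈ h) :
    ¬ (shift x y ∨ shift y x) := by
  rintro (hxy | hyx)
  exacts [key_ne_of_shift hxy h.kind (hx.trans hy.symm),
    key_ne_of_shift hyx h.kind (hy.trans hx.symm)]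

lemma not_hubAdj_of_mem {x : Word α} {g h : Hub α} (hg : x ∈ g) (hh : x ∈ h) :
    ¬ HubAdj g h := by
  rintro ⟨hk, -, -, ho⟩
  rw [Hub.mem_def, hk, hh, Prod.mk.injEq] at hg
  exact ho hg.2.symm

lemma not_hubAdj_triangle {f g h : Hub α} (hfg : HubAdj f g) (hgh : HubAdj g h)
    (hfh : HubAdj f h) : False := by
  have h₁ := hfg.2.1
  have h₂ := hgh.2.1
  have h₃ := hfh.2.1
  revert h₁ h₂ h₃
  generalize f.side = p, g.side = q, h.side = r
  decide +revert

lemma graph_cliqueFree_three : (graph α).CliqueFree 3 := by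
  classical
  intro s hs
  obtain ⟨u, v, w, huv, huw, hvw, -⟩ := SimpleGraph.is3Clique_iff.1 hs
  rcases u with x | f <;> rcases v with y | g <;> rcases w with z | h <;>
    simp only [graph_adj_inl_inl, graph_adj_inl_inr, graph_adj_inr_inl, graph_adj_inr_inr]
      at huv huw hvw
  · exact not_shift_triangle huv hvw huw
  · exact not_shift_of_mem huw hvw huv
  · exact not_shift_of_mem huv hvw huw
  · exact not_hubAdj_of_mem huv huw hvw
  · exact not_shift_of_mem huv huw hvw
  · exact not_hubAdj_of_mem huv hvw huw
  · exact not_hubAdj_of_mem huw hvw huv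
  · exact not_hubAdj_triangle huv hvw huw

end TriangleFree

section Degree

lemma shift_injOn_c (x : Word α) : InjOn Word.c {y | shift x y} :=
  fun _ hy _ hz hc => Word.ext (hy.1.trans hz.1.symm) (hy.2.1.trans hz.2.1.symm) hc

lemma shift_injOn_a (x : Word α) : InjOn Word.a {y | shift y x} :=
  fun _ hy _ hz ha => Word.ext ha (hy.1.symm.trans hz.1) (hy.2.1.symm.trans hz.2.1)

lemma Word.ext_of_key {x y : Word α} {i : Fin 3} (hk : x.key i = y.key i)
    (hf : x.free i = y.free i) : x = y := by
  fin_cases i <;> simp_all [Word.key, Word.free, Word.ext_iff]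

lemma Hub.injOn_kind_side (x : Word α) :
    InjOn (fun h : Hub α => (h.kind, h.side)) {h | x ∈ h} := by
  intro g (hg : x ∈ g) h (hh : x ∈ h) e
  simp only [Prod.mk.injEq] at e
  rw [Hub.mem_def, e.1, hh, Prod.mk.injEq] at hg
  cases g; cases h
  simp_all

lemma Hub.injOn_other (f : Hub α) : InjOn Hub.other {g | HubAdj f g} := by
  rintro g ⟨k₁, s₁, e₁, -⟩ h ⟨k₂, s₂, e₂, -⟩ ho
  obtain ⟨_, s, _, _⟩ := f
  cases g; cases h
  cases s <;> simp_all

variable [Finite α]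

lemma ncard_neighborSet_inl_le (x : Word α) :
    {w | (graph α).Adj (.inl x) w}.ncard ≤ 2 * Nat.card α + 6 := by
  have hsub : {w | (graph α).Adj (.inl x) w} ⊆
      .inl '' {y | shift x y} ∪ .inl '' {y | shift y x} ∪ .inr '' {h | x ∈ h} := by
    rintro (y | h) hw
    · rcases hw with hxy | hyx
      exacts [.inl (.inl ⟨y, hxy, rfl⟩), .inl (.inr ⟨y, hyx, rfl⟩)]
    · exact .inr ⟨h, hw, rfl⟩
  have hfwd := ncard_le_natCard_of_injOn _ (shift_injOn_c x)
  have hbwd := ncard_le_natCard_of_injOn _ (shift_injOn_a x)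
  have hhub : {h : Hub α | x ∈ h}.ncard ≤ 6 :=
    (ncard_le_natCard_of_injOn _ (Hub.injOn_kind_side x)).trans_eq (by simp)
  calc _ ≤ _ := ncard_le_ncard hsub
    _ ≤ {y | shift x y}.ncard + {y | shift y x}.ncard + {h : Hub α | x ∈ h}.ncard := by
      grw [ncard_union_le, ncard_union_le, ncard_image_of_injective _ Sum.inl_injective,
        ncard_image_of_injective _ Sum.inl_injective, ncard_image_of_injective _ Sum.inr_injective]
    _ ≤ _ := by omega

lemma ncard_neighborSet_inr_le (h : Hub α) :
    {w | (graph α).Adj (.inr h) w}.ncard ≤ 2 * Nat.card α := by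
  have hsub : {w | (graph α).Adj (.inr h) w} ⊆ .inl '' {y | y ∈ h} ∪ .inr '' {g | HubAdj h g} := by
    rintro (y | g) hw
    exacts [.inl ⟨y, hw, rfl⟩, .inr ⟨g, hw, rfl⟩]
  have hwords : {y : Word α | y ∈ h}.ncard ≤ Nat.card α :=
    ncard_le_natCard_of_injOn (Word.free · h.kind) fun _ hy _ hz =>
      Word.ext_of_key (hy.trans hz.symm)
  have hhubs := ncard_le_natCard_of_injOn _ (Hub.injOn_other h)
  calc _ ≤ _ := ncard_le_ncard hsub
    _ ≤ {y : Word α | y ∈ h}.ncard + {g | HubAdj h g}.ncard := by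
      grw [ncard_union_le, ncard_image_of_injective _ Sum.inl_injective,
        ncard_image_of_injective _ Sum.inr_injective]
    _ ≤ _ := by omega

lemma ncard_neighborSet_le (v : Word α ⊕ Hub α) :
    {w | (graph α).Adj v w}.ncard ≤ 2 * Nat.card α + 6 := by
  rcases v with x | h
  exacts [ncard_neighborSet_inl_le x, (ncard_neighborSet_inr_le h).trans (Nat.le_add_right _ _)]

end Degree

section WordsClose

open SimpleGraph.Walk

lemma exists_walk_of_key_fst_eq {x y : Word α} {i : Fin 3} (hk : (x.key i).1 = (y.key i).1) :
    ∃ w : (graph α).Walk (.inl x) (.inl y), w.length ≤ 3 := by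
  let g : Hub α := ⟨i, false, (x.key i).1, (x.key i).2⟩
  let h : Hub α := ⟨i, true, (y.key i).1, (y.key i).2⟩
  have hxg : (graph α).Adj (.inl x) (.inr g) := rfl
  have hhy : (graph α).Adj (.inr h) (.inl y) := rfl
  by_cases ho : (x.key i).2 = (y.key i).2
  · have hgy : (graph α).Adj (.inr g) (.inl y) := Hub.mem_def.2 (Prod.ext hk.symm ho.symm)
    exact ⟨cons hxg (cons hgy nil), by simp⟩
  · have hgh : (graph α).Adj (.inr g) (.inr h) := ⟨rfl, Bool.false_ne_true, hk, ho⟩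
    exact ⟨cons hxg (cons hgh (cons hhy nil)), by simp⟩

lemma exists_shift_walk {x y : Word α} (ha : x.a ≠ y.a) (hb : x.b ≠ y.b) (hc : x.c ≠ y.c)
    (hca : x.c ≠ y.a) : ∃ w : (graph α).Walk (.inl x) (.inl y), w.length ≤ 3 := by
  let p : Word α := ⟨x.b, x.c, y.a, x.b_ne_c, hca⟩
  let q : Word α := ⟨x.c, y.a, y.b, hca, y.a_ne_b⟩
  have hxp : shift x p := ⟨rfl, rfl, ha.symm⟩
  have hpq : shift p q := ⟨rfl, rfl, hb.symm⟩
  have hqy : shift q y := ⟨rfl, rfl, hc.symm⟩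
  exact ⟨cons (adj_of_shift hxp) (cons (adj_of_shift hpq) (cons (adj_of_shift hqy) nil)), by simp⟩

lemma exists_rotation_walk {x y : Word α} (hca : x.c = y.a) (hac : y.c = x.a) :
    ∃ w : (graph α).Walk (.inl x) (.inl y), w.length ≤ 3 := by
  let p : Word α := ⟨x.b, x.c, y.b, x.b_ne_c, hca ▸ y.a_ne_b⟩
  have hxp : shift x p := ⟨rfl, rfl, hac ▸ y.b_ne_c⟩
  have hpy : shift p y := ⟨hca.symm, rfl, hac ▸ x.a_ne_b⟩
  exact ⟨cons (adj_of_shift hxp) (cons (adj_of_shift hpy) nil), by simp⟩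

lemma exists_walk_length_le_three (x y : Word α) :
    ∃ w : (graph α).Walk (.inl x) (.inl y), w.length ≤ 3 := by
  by_cases ha : x.a = y.a
  · exact exists_walk_of_key_fst_eq (i := 0) ha
  by_cases hb : x.b = y.b
  · exact exists_walk_of_key_fst_eq (i := 1) hb
  by_cases hc : x.c = y.c
  · exact exists_walk_of_key_fst_eq (i := 2) hc
  by_cases hca : x.c = y.a
  · by_cases hac : y.c = x.a
    · exact exists_rotation_walk hca hac
    · obtain ⟨w, hw⟩ := exists_shift_walk (Ne.symm ha) (Ne.symm hb) (Ne.symm hc) hac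
      exact ⟨w.reverse, by simpa using hw⟩
  · exact exists_shift_walk ha hb hc hca

end WordsClose

lemma natCard_word [Finite α] : Nat.card (Word α) = Nat.card α * (Nat.card α - 1) ^ 2 := by
  classical
  have := Fintype.ofFinite α
  let e : Word α ≃ Σ b : α, {a // a ≠ b} × {c // b ≠ c} :=
    { toFun := fun x => ⟨x.b, ⟨x.a, x.a_ne_b⟩, ⟨x.c, x.b_ne_c⟩⟩
      invFun := fun ⟨b, a, c⟩ => ⟨a, b, c, a.2, c.2⟩
      left_inv := fun _ => rfl
      right_inv := fun _ => rfl }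
  rw [Nat.card_congr e, Nat.card_sigma]
  simp [Nat.card_eq_fintype_card, sq]

lemma natCard_word_le_chromaticNumber_power_three [Finite α] :
    Nat.card (Word α) ≤ ((graph α).power 3).chromaticNumber.toNat :=
  SimpleGraph.natCard_le_chromaticNumber_toNat Sum.inl fun x y hxy =>
    ⟨Sum.inl_injective.ne hxy, exists_walk_length_le_three x y⟩

end ShiftHub

lemma one_sub_mul_cube_div_eight_le {ε d m : ℝ} (hd : 9 ≤ d) (hεd : 27 ≤ ε * d)
    (hdm : d ≤ 2 * m + 9) : (1 - ε) * d ^ 3 / 8 ≤ (m + 1) * m ^ 2 := by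
  calc (1 - ε) * d ^ 3 / 8 ≤ ((d - 9) / 2) ^ 3 := by
        nlinarith [mul_le_mul_of_nonneg_right hεd (sq_nonneg d)]
    _ ≤ m ^ 3 := pow_le_pow_left₀ (by linarith) (by linarith) 3
    _ ≤ (m + 1) * m ^ 2 := by nlinarith [sq_nonneg m]

/-- `χ³₄(d) ≳ d³/8` as `d → ∞`. -/
theorem cube_girth_four_lower (ε : ℝ) (hε0 : 0 < ε) (hε1 : ε < 1) :
    ∃ d₀ : ℕ, ∀ d : ℕ, d₀ ≤ d →
      ∃ (V : Type) (_ : Fintype V) (G : SimpleGraph V),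
        (∀ v : V, {w : V | G.Adj v w}.ncard ≤ d) ∧
        4 ≤ G.egirth ∧
        (1 - ε) * (d : ℝ) ^ 3 / 8 ≤ ((G.power 3).chromaticNumber.toNat : ℝ) := by
  refine ⟨⌈27 / ε⌉₊, fun d hd => ?_⟩
  have hεd : 27 ≤ ε * d := (div_le_iff₀' hε0).1 (Nat.ceil_le.1 hd)
  have hd27 : 27 ≤ d := by exact_mod_cast (show (27 : ℝ) ≤ d by nlinarith)
  set m := (d - 8) / 2
  refine ⟨ShiftHub.Word (Fin (m + 1)) ⊕ ShiftHub.Hub (Fin (m + 1)), Fintype.ofFinite _,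
    ShiftHub.graph _, fun v => ?_,
    SimpleGraph.four_le_egirth_of_cliqueFree_three ShiftHub.graph_cliqueFree_three, ?_⟩
  · have := ShiftHub.ncard_neighborSet_le v
    rw [Nat.card_fin] at this
    omega
  · calc (1 - ε) * (d : ℝ) ^ 3 / 8 ≤ ((m + 1) * m ^ 2 : ℕ) := by
          push_cast
          exact one_sub_mul_cube_div_eight_le (by exact_mod_cast (by omega : 9 ≤ d)) hεd
            (by exact_mod_cast (by omega : d ≤ 2 * m + 9))
      _ = Nat.card (ShiftHub.Word (Fin (m + 1))) := by simp [ShiftHub.natCard_word]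
      _ ≤ _ := by exact_mod_cast ShiftHub.natCard_word_le_chromaticNumber_power_three
end
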